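/- arXiv:2411.01660 — 3 statements merged into one kernel-verified Lean document; each statement's English description precedes it below -/
import Mathlib

section
/- For all x, y ∈ ℝᴰ and a, b ∈ ℝ with (a,b) ≠ (0,0), one has ⟨x⟩⁻¹·⟨y⟩⁻¹ ≤ ⟨(a·x + b·y)/(|a|+|b|)⟩⁻¹ · (⟨x⟩⁻¹ + ⟨y⟩⁻¹), where ⟨z⟩ := (1 + |z|²)^{1/2} denotes the Japanese bracket. -/
open Real

/-- Japanese bracket splitting inequality in ℝᴰ. -/
theorem stmt_0 (D : ℕ) (x y : EuclideanSpace ℝ (Fin D)) (a b : ℝ)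
    (hab : ¬(a = 0 ∧ b = 0)) :
    ((1 + ‖x‖ ^ 2) ^ ((1 : ℝ) / 2))⁻¹ * ((1 + ‖y‖ ^ 2) ^ ((1 : ℝ) / 2))⁻¹ ≤
      ((1 + ‖(|a| + |b|)⁻¹ • (a • x + b • y)‖ ^ 2) ^ ((1 : ℝ) / 2))⁻¹ *
        (((1 + ‖x‖ ^ 2) ^ ((1 : ℝ) / 2))⁻¹ + ((1 + ‖y‖ ^ 2) ^ ((1 : ℝ) / 2))⁻¹) := by
  have hs : 0 < |a| + |b| := by
    rcases not_and_or.mp hab with h | h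
    · have : 0 < |a| := abs_pos.mpr h
      have : 0 ≤ |b| := abs_nonneg b
      linarith
    · have : 0 < |b| := abs_pos.mpr h
      have : 0 ≤ |a| := abs_nonneg a
      linarith
  set z := (|a| + |b|)⁻¹ • (a • x + b • y) with hz
  have hM : ‖z‖ ≤ max ‖x‖ ‖y‖ := by
    have h1 : ‖a • x + b • y‖ ≤ |a| * ‖x‖ + |b| * ‖y‖ := by
      calc ‖a • x + b • y‖ ≤ ‖a • x‖ + ‖b • y‖ := norm_add_le _ _
        _ = |a| * ‖x‖ + |b| * ‖y‖ := by rw [norm_smul, norm_smul]; rfl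
    have h2 : |a| * ‖x‖ + |b| * ‖y‖ ≤ (|a| + |b|) * max ‖x‖ ‖y‖ := by
      have := mul_le_mul_of_nonneg_left (le_max_left ‖x‖ ‖y‖) (abs_nonneg a)
      have := mul_le_mul_of_nonneg_left (le_max_right ‖x‖ ‖y‖) (abs_nonneg b)
      nlinarith
    have : ‖z‖ = (|a| + |b|)⁻¹ * ‖a • x + b • y‖ := by
      rw [hz, norm_smul, Real.norm_eq_abs, abs_of_pos (inv_pos.mpr hs)]
    rw [this]
    rw [inv_mul_le_iff₀ hs, mul_comm]
    exact h1.trans (by linarith [h2])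
  -- brackets
  have key : ∀ w : EuclideanSpace ℝ (Fin D), (0:ℝ) < (1 + ‖w‖ ^ 2) ^ ((1:ℝ)/2) := by
    intro w
    apply Real.rpow_pos_of_pos
    positivity
  have mono : ∀ u v : EuclideanSpace ℝ (Fin D), ‖u‖ ≤ ‖v‖ →
      (1 + ‖u‖ ^ 2) ^ ((1:ℝ)/2) ≤ (1 + ‖v‖ ^ 2) ^ ((1:ℝ)/2) := by
    intro u v h
    apply Real.rpow_le_rpow (by positivity)
    · nlinarith [norm_nonneg u, norm_nonneg v]
    · norm_num
  set U := ((1 + ‖x‖ ^ 2) ^ ((1:ℝ)/2))⁻¹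
  set V := ((1 + ‖y‖ ^ 2) ^ ((1:ℝ)/2))⁻¹
  set W := ((1 + ‖z‖ ^ 2) ^ ((1:ℝ)/2))⁻¹
  have hU : 0 < U := inv_pos.mpr (key x)
  have hV : 0 < V := inv_pos.mpr (key y)
  have hW : 0 < W := inv_pos.mpr (key z)
  rcases le_total ‖x‖ ‖y‖ with h | h
  · have hzy : ‖z‖ ≤ ‖y‖ := hM.trans (max_le h le_rfl)
    have hWV : V ≤ W := by
      apply inv_anti₀ (key z) (mono _ _ hzy)
    have hVU : V ≤ U := by
      apply inv_anti₀ (key x) (mono _ _ h)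
    nlinarith
  · have hzx : ‖z‖ ≤ ‖x‖ := hM.trans (max_le le_rfl h)
    have hWU : U ≤ W := by
      apply inv_anti₀ (key z) (mono _ _ hzx)
    have hUV : U ≤ V := by
      apply inv_anti₀ (key y) (mono _ _ h)
    nlinarith
end

section
/- Let Y₁, Y₂, Y₃ ∈ ℝ and let Y denote the diagonal matrix diag(Y₁,Y₂,Y₃). Define Y^{a,b,c} := det of the 3×3 matrix with rows (Y_i^a, Y_i^b, Y_i^c) for i = 1,2,3. Then the 3×3 matrix M_Y determined by the identity (for all x ∈ ℝ and v ∈ ℝ³) ((Y² + 2x²Y + x⁴)v) ∧ (Y²·1) ∧ (Y³·1) = (1, x², x⁴)·M_Y·v (where u ∧ v ∧ w denotes the determinant of the matrix with columns u,v,w and 1 = (1,1,1)ᵀ) satisfies det M_Y = 2·(Y₁Y₂Y₃)⁴·(Y₁−Y₂)²·(Y₁−Y₃)²·(Y₂−Y₃)². -/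
open Matrix

/-- Determinant of the matrix `M_Y` from the moment-curve computation:
if `M` satisfies `((Y²+2x²Y+x⁴)v) ∧ (Y²·1) ∧ (Y³·1) = (1,x²,x⁴)·M·v` for all
`x` and `v` (where `u ∧ v ∧ w` is the determinant of the matrix with columns
`u, v, w`), then `det M = 2(Y₁Y₂Y₃)⁴(Y₁-Y₂)²(Y₁-Y₃)²(Y₂-Y₃)²`. -/
theorem stmt_6 (Y : Fin 3 → ℝ) (M : Matrix (Fin 3) (Fin 3) ℝ)
    (hM : ∀ (x : ℝ) (v : Fin 3 → ℝ),
      (Matrix.of fun i j =>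
        ![(fun i => (Y i ^ 2 + 2 * x ^ 2 * Y i + x ^ 4) * v i),
          (fun i => Y i ^ 2),
          (fun i => Y i ^ 3)] j i).det =
        ![1, x ^ 2, x ^ 4] ⬝ᵥ M.mulVec v) :
    M.det = 2 * (Y 0 * Y 1 * Y 2) ^ 4 * (Y 0 - Y 1) ^ 2 * (Y 0 - Y 2) ^ 2 * (Y 1 - Y 2) ^ 2 := by
  have hs2 : (Real.sqrt 2) ^ 2 = 2 := Real.sq_sqrt (by norm_num)
  have hs4 : (Real.sqrt 2) ^ 4 = 4 := by
    have : (Real.sqrt 2) ^ 4 = ((Real.sqrt 2) ^ 2) ^ 2 := by ring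
    rw [this, hs2]; norm_num
  have h00 := hM 0 (Pi.single 0 1)
  have h10 := hM 1 (Pi.single 0 1)
  have h20 := hM (Real.sqrt 2) (Pi.single 0 1)
  have h01 := hM 0 (Pi.single 1 1)
  have h11 := hM 1 (Pi.single 1 1)
  have h21 := hM (Real.sqrt 2) (Pi.single 1 1)
  have h02 := hM 0 (Pi.single 2 1)
  have h12 := hM 1 (Pi.single 2 1)
  have h22 := hM (Real.sqrt 2) (Pi.single 2 1)
  simp [Matrix.det_fin_three, Matrix.mulVec, dotProduct, Fin.sum_univ_three,
    Pi.single_apply, hs2, hs4] at h00 h10 h20 h01 h11 h21 h02 h12 h22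
  rw [Matrix.det_fin_three]
  have e00 : M 0 0 = Y 0 ^ 2 * (Y 1 ^ 2 * Y 2 ^ 3 - Y 1 ^ 3 * Y 2 ^ 2) := by linarith
  have e10 : M 1 0 = 2 * Y 0 * (Y 1 ^ 2 * Y 2 ^ 3 - Y 1 ^ 3 * Y 2 ^ 2) := by linarith
  have e20 : M 2 0 = (Y 1 ^ 2 * Y 2 ^ 3 - Y 1 ^ 3 * Y 2 ^ 2) := by linarith
  have e01 : M 0 1 = Y 1 ^ 2 * (Y 2 ^ 2 * Y 0 ^ 3 - Y 2 ^ 3 * Y 0 ^ 2) := by linarith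
  have e11 : M 1 1 = 2 * Y 1 * (Y 2 ^ 2 * Y 0 ^ 3 - Y 2 ^ 3 * Y 0 ^ 2) := by linarith
  have e21 : M 2 1 = (Y 2 ^ 2 * Y 0 ^ 3 - Y 2 ^ 3 * Y 0 ^ 2) := by linarith
  have e02 : M 0 2 = Y 2 ^ 2 * (Y 0 ^ 2 * Y 1 ^ 3 - Y 0 ^ 3 * Y 1 ^ 2) := by linarith
  have e12 : M 1 2 = 2 * Y 2 * (Y 0 ^ 2 * Y 1 ^ 3 - Y 0 ^ 3 * Y 1 ^ 2) := by linarith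
  have e22 : M 2 2 = (Y 0 ^ 2 * Y 1 ^ 3 - Y 0 ^ 3 * Y 1 ^ 2) := by linarith
  rw [e00, e10, e20, e01, e11, e21, e02, e12, e22]
  ring
end

section
/- Let N ≥ 2, λ ≥ 1. Then the double average over r, s ranging over integers comparable to √λ satisfies: for all x, y ∈ ℝ, ( E_{r ≍ √λ} ⟨2rx − √λ y⟩^{−N} )² ≤ C · ( E_{|r| ≲ √λ} ⟨2rx⟩^{−N} ) · ( E_{s ≍ √λ} ⟨2sx − √λ y⟩^{−N} ), where E denotes the average (expectation) over the stated finite integer range and ⟨z⟩ = (1+z²)^{1/2}, and C is absolute. -/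
/-!
Write `f r = ⟨2rx - √λ y⟩^{-N}` and `g k = ⟨2kx⟩^{-N}`. Since `⟨u - v⟩ ≤ 2 max (⟨u⟩, ⟨v⟩)`,
one has `⟨u⟩^{-N} ⟨v⟩^{-N} ≤ 2^N ⟨u - v⟩^{-N} (⟨u⟩^{-N} + ⟨v⟩^{-N})`, and the two arguments of
`f r` and `f s` differ by `2(r - s)x`, so `f r f s ≤ 2^N g(r - s) (f r + f s)`. Expanding the
square of `∑_{r ≍ √λ} f r` as a double sum and applying this pointwise, the sum of `g (r - s)`
over one variable is at most `∑_{|k| ≲ √λ} g k`, because `r - s` stays in that range. Passing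
to averages costs the ratio of the cardinalities of the two ranges, which is at most `8`.
-/

open Finset Real
open scoped Pointwise BigOperators

/-- `⟨z⟩ ^ (-s)`, where `⟨z⟩ = (1 + z²) ^ (1/2)` is the Japanese bracket. -/
noncomputable def japaneseWeight (s z : ℝ) : ℝ := (1 + z ^ 2) ^ (-s / 2)

lemma japaneseWeight_nonneg (s z : ℝ) : 0 ≤ japaneseWeight s z := by
  unfold japaneseWeight; positivity

lemma japaneseWeight_sub_comm (s u v : ℝ) :
    japaneseWeight s (u - v) = japaneseWeight s (v - u) := by
  rw [japaneseWeight, ← neg_sub, neg_sq, japaneseWeight]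

lemma japaneseWeight_le_two_rpow_mul_sub {s u v : ℝ} (hs : 0 ≤ s) (h : v ^ 2 ≤ u ^ 2) :
    japaneseWeight s u ≤ 2 ^ s * japaneseWeight s (u - v) := by
  have hsub : 1 + (u - v) ^ 2 ≤ 4 * (1 + u ^ 2) := by nlinarith [sq_nonneg (u + v)]
  have hfour : (4 : ℝ) ^ (-s / 2) = (2 ^ s)⁻¹ := by
    rw [show (4 : ℝ) = 2 ^ (2 : ℝ) by norm_num, ← rpow_mul (by norm_num),
      show 2 * (-s / 2) = -s by ring, rpow_neg (by norm_num)]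
  calc japaneseWeight s u = 2 ^ s * (4 * (1 + u ^ 2)) ^ (-s / 2) := by
        rw [mul_rpow (by norm_num) (by positivity), hfour, ← mul_assoc,
          mul_inv_cancel₀ (by positivity), one_mul, japaneseWeight]
    _ ≤ 2 ^ s * japaneseWeight s (u - v) := by
        gcongr
        exact rpow_le_rpow_of_nonpos (by positivity) hsub (by linarith)

lemma min_japaneseWeight_le {s : ℝ} (hs : 0 ≤ s) (u v : ℝ) :
    min (japaneseWeight s u) (japaneseWeight s v) ≤ 2 ^ s * japaneseWeight s (u - v) := by
  rcases le_total (v ^ 2) (u ^ 2) with h | h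
  · exact (min_le_left _ _).trans (japaneseWeight_le_two_rpow_mul_sub hs h)
  · rw [japaneseWeight_sub_comm]
    exact (min_le_right _ _).trans (japaneseWeight_le_two_rpow_mul_sub hs h)

lemma japaneseWeight_mul_le {s : ℝ} (hs : 0 ≤ s) (u v : ℝ) :
    japaneseWeight s u * japaneseWeight s v ≤
      2 ^ s * (japaneseWeight s (u - v) * (japaneseWeight s u + japaneseWeight s v)) := by
  rw [← min_mul_max, ← mul_assoc]
  exact mul_le_mul (min_japaneseWeight_le hs u v)
    (max_le_add_of_nonneg (japaneseWeight_nonneg _ _) (japaneseWeight_nonneg _ _))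
    ((japaneseWeight_nonneg _ _).trans (le_max_left _ _))
    (mul_nonneg (by positivity) (japaneseWeight_nonneg _ _))

lemma Finset.sum_comp_le_sum_of_injOn {ι κ M : Type*} [AddCommMonoid M] [Preorder M]
    [AddLeftMono M] {s : Finset ι} {t : Finset κ} {φ : ι → κ} {g : κ → M}
    (hg : ∀ k ∈ t, 0 ≤ g k) (hφ : Set.InjOn φ s) (hmaps : ∀ i ∈ s, φ i ∈ t) :
    ∑ i ∈ s, g (φ i) ≤ ∑ k ∈ t, g k := by
  classical
  rw [← sum_image hφ]
  exact sum_le_sum_of_subset_of_nonneg (image_subset_iff.mpr hmaps) fun k hk _ => hg k hk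

section Convolution

variable {G : Type*} [AddCommGroup G] [DecidableEq G] {I J : Finset G} {f g : G → ℝ} {K : ℝ}

lemma sq_sum_le_of_mul_le_sub (hIJ : I - I ⊆ J) (hK : 0 ≤ K) (hf : ∀ r ∈ I, 0 ≤ f r)
    (hg : ∀ k ∈ J, 0 ≤ g k)
    (hfg : ∀ r ∈ I, ∀ s ∈ I, f r * f s ≤ K * (g (r - s) * (f r + f s))) :
    (∑ r ∈ I, f r) ^ 2 ≤ 2 * K * (∑ k ∈ J, g k) * ∑ r ∈ I, f r := by
  have hrow : ∀ r ∈ I, ∑ s ∈ I, g (r - s) ≤ ∑ k ∈ J, g k := fun r hr =>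
    sum_comp_le_sum_of_injOn hg (fun _ _ _ _ h => sub_right_injective h)
      fun _ hs => hIJ (sub_mem_sub hr hs)
  have hcol : ∀ s ∈ I, ∑ r ∈ I, g (r - s) ≤ ∑ k ∈ J, g k := fun s hs =>
    sum_comp_le_sum_of_injOn hg (fun _ _ _ _ h => sub_left_injective h)
      fun _ hr => hIJ (sub_mem_sub hr hs)
  calc (∑ r ∈ I, f r) ^ 2 = ∑ r ∈ I, ∑ s ∈ I, f r * f s := by rw [sq, sum_mul_sum]
    _ ≤ ∑ r ∈ I, ∑ s ∈ I, K * (g (r - s) * (f r + f s)) :=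
        sum_le_sum fun r hr => sum_le_sum fun s hs => hfg r hr s hs
    _ = K * (∑ r ∈ I, (∑ s ∈ I, g (r - s)) * f r + ∑ s ∈ I, (∑ r ∈ I, g (r - s)) * f s) := by
        simp only [sum_mul, mul_add, sum_add_distrib, mul_sum]
        rw [sum_comm (s := I) (t := I) (f := fun s r => K * (g (r - s) * f s))]
    _ ≤ K * (∑ r ∈ I, (∑ k ∈ J, g k) * f r + ∑ s ∈ I, (∑ k ∈ J, g k) * f s) := by
        gcongr with r hr s hs
        · exact hf r hr
        · exact hrow r hr
        · exact hf s hs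
        · exact hcol s hs
    _ = 2 * K * (∑ k ∈ J, g k) * ∑ r ∈ I, f r := by rw [← mul_sum]; ring

lemma sq_expect_le_of_mul_le_sub (hI : I.Nonempty) (hIJ : I - I ⊆ J) {c : ℝ}
    (hcard : (#J : ℝ) ≤ c * #I) (hK : 0 ≤ K) (hf : ∀ r ∈ I, 0 ≤ f r) (hg : ∀ k ∈ J, 0 ≤ g k)
    (hfg : ∀ r ∈ I, ∀ s ∈ I, f r * f s ≤ K * (g (r - s) * (f r + f s))) :
    (𝔼 r ∈ I, f r) ^ 2 ≤ 2 * K * c * (𝔼 k ∈ J, g k) * 𝔼 r ∈ I, f r := by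
  have hJ : J.Nonempty := (hI.sub hI).mono hIJ
  have hnI : (0 : ℝ) < #I := by exact_mod_cast hI.card_pos
  have hnJ : (0 : ℝ) < #J := by exact_mod_cast hJ.card_pos
  have hS : 0 ≤ ∑ r ∈ I, f r := sum_nonneg hf
  have hT : 0 ≤ ∑ k ∈ J, g k := sum_nonneg hg
  simp only [expect_eq_sum_div_card]
  calc ((∑ r ∈ I, f r) / #I) ^ 2
      = (∑ r ∈ I, f r) ^ 2 / #I / #I := by rw [div_pow, sq (#I : ℝ), div_div]
    _ ≤ 2 * K * (∑ k ∈ J, g k) * (∑ r ∈ I, f r) / #I / #I := by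
        gcongr; exact sq_sum_le_of_mul_le_sub hIJ hK hf hg hfg
    _ ≤ 2 * K * (∑ k ∈ J, g k) * (∑ r ∈ I, f r) * c / #J / #I := by
        gcongr ?_ / _
        rw [div_le_div_iff₀ hnI hnJ, mul_assoc _ c]
        exact mul_le_mul_of_nonneg_left hcard
          (mul_nonneg (mul_nonneg (mul_nonneg zero_le_two hK) hT) hS)
    _ = 2 * K * c * ((∑ k ∈ J, g k) / #J) * ((∑ r ∈ I, f r) / #I) := by ring

end Convolution

/-- The integers `r ≍ t`. -/
noncomputable def comparableIcc (t : ℝ) : Finset ℤ := Icc ⌈t / 3⌉ ⌊3 * t⌋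

/-- The integers `|r| ≲ t`. -/
noncomputable def centeredIcc (t : ℝ) : Finset ℤ := Icc (-⌊6 * t⌋) ⌊6 * t⌋

lemma comparableIcc_nonempty {t : ℝ} (ht : 1 ≤ t) : (comparableIcc t).Nonempty := by
  refine nonempty_Icc.mpr (Int.ceil_le.mpr ?_)
  linarith [Int.sub_one_lt_floor (3 * t)]

lemma comparableIcc_sub_subset {t : ℝ} (ht : 0 ≤ t) :
    comparableIcc t - comparableIcc t ⊆ centeredIcc t := by
  have ha : 0 ≤ ⌈t / 3⌉ := Int.ceil_nonneg (by positivity)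
  have hb : ⌊3 * t⌋ ≤ ⌊6 * t⌋ := Int.floor_mono (by linarith)
  intro k hk
  obtain ⟨r, hr, s, hs, rfl⟩ := mem_sub.mp hk
  simp only [comparableIcc, centeredIcc, mem_Icc] at hr hs ⊢
  omega

lemma card_centeredIcc_le {t : ℝ} (ht : 1 ≤ t) : #(centeredIcc t) ≤ 8 * #(comparableIcc t) := by
  have hreal : (2 * ⌊6 * t⌋ + 1 : ℝ) < 8 * (⌊3 * t⌋ + 1 - ⌈t / 3⌉) := by
    linarith [Int.floor_le (6 * t), Int.sub_one_lt_floor (3 * t), Int.ceil_lt_add_one (t / 3)]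
  have hint : 2 * ⌊6 * t⌋ + 1 < 8 * (⌊3 * t⌋ + 1 - ⌈t / 3⌉) := by exact_mod_cast hreal
  simp only [comparableIcc, centeredIcc, Int.card_Icc]
  omega

theorem stmt_14_general (N : ℕ) :
    ∃ C : ℝ, 0 < C ∧ ∀ lam : ℝ, 1 ≤ lam → ∀ x y : ℝ,
      (((Finset.Icc ⌈Real.sqrt lam / 3⌉ ⌊3 * Real.sqrt lam⌋).card : ℝ)⁻¹ *
          ∑ r ∈ Finset.Icc ⌈Real.sqrt lam / 3⌉ ⌊3 * Real.sqrt lam⌋,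
            (1 + (2 * (r : ℝ) * x - Real.sqrt lam * y) ^ 2) ^ (-(N : ℝ) / 2)) ^ 2 ≤
        C * (((Finset.Icc (-⌊6 * Real.sqrt lam⌋) ⌊6 * Real.sqrt lam⌋).card : ℝ)⁻¹ *
            ∑ r ∈ Finset.Icc (-⌊6 * Real.sqrt lam⌋) ⌊6 * Real.sqrt lam⌋,
              (1 + (2 * (r : ℝ) * x) ^ 2) ^ (-(N : ℝ) / 2)) *
          (((Finset.Icc ⌈Real.sqrt lam / 3⌉ ⌊3 * Real.sqrt lam⌋).card : ℝ)⁻¹ *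
            ∑ s ∈ Finset.Icc ⌈Real.sqrt lam / 3⌉ ⌊3 * Real.sqrt lam⌋,
              (1 + (2 * (s : ℝ) * x - Real.sqrt lam * y) ^ 2) ^ (-(N : ℝ) / 2)) := by
  refine ⟨2 * 2 ^ (N : ℝ) * 8, by positivity, fun lam hlam x y => ?_⟩
  have ht : 1 ≤ √lam := one_le_sqrt.mpr hlam
  have hcard : (#(centeredIcc √lam) : ℝ) ≤ 8 * #(comparableIcc √lam) := by
    exact_mod_cast card_centeredIcc_le ht
  have hsplit : ∀ r s : ℤ,
      japaneseWeight N (2 * r * x - √lam * y) * japaneseWeight N (2 * s * x - √lam * y) ≤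
        2 ^ (N : ℝ) * (japaneseWeight N (2 * ((r - s : ℤ) : ℝ) * x) *
          (japaneseWeight N (2 * r * x - √lam * y) + japaneseWeight N (2 * s * x - √lam * y))) := by
    intro r s
    have h := japaneseWeight_mul_le N.cast_nonneg (2 * r * x - √lam * y) (2 * s * x - √lam * y)
    rwa [show 2 * r * x - √lam * y - (2 * s * x - √lam * y) = 2 * ((r - s : ℤ) : ℝ) * x by
      push_cast; ring] at h
  have hbound := sq_expect_le_of_mul_le_sub (K := 2 ^ (N : ℝ))
    (f := fun r : ℤ => japaneseWeight N (2 * r * x - √lam * y))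
    (g := fun k : ℤ => japaneseWeight N (2 * k * x)) (comparableIcc_nonempty ht)
    (comparableIcc_sub_subset (by positivity)) hcard (by positivity)
    (fun r _ => japaneseWeight_nonneg _ _) (fun k _ => japaneseWeight_nonneg _ _)
    (fun r _ s _ => hsplit r s)
  simp only [expect_eq_sum_div_card, div_eq_inv_mul] at hbound
  exact hbound

/-- Cauchy–Schwarz/re-indexing bound for the double average of Japanese-bracket
weights: `(E_{r ≍ √λ} ⟨2rx - √λ y⟩^{-N})² ≲ (E_{|r| ≲ √λ} ⟨2rx⟩^{-N}) ·
(E_{s ≍ √λ} ⟨2sx - √λ y⟩^{-N})`. -/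
theorem stmt_14 (N : ℕ) (hN : 2 ≤ N) :
    ∃ C : ℝ, 0 < C ∧ ∀ lam : ℝ, 1 ≤ lam → ∀ x y : ℝ,
      (((Finset.Icc ⌈Real.sqrt lam / 3⌉ ⌊3 * Real.sqrt lam⌋).card : ℝ)⁻¹ *
          ∑ r ∈ Finset.Icc ⌈Real.sqrt lam / 3⌉ ⌊3 * Real.sqrt lam⌋,
            (1 + (2 * (r : ℝ) * x - Real.sqrt lam * y) ^ 2) ^ (-(N : ℝ) / 2)) ^ 2 ≤
        C * (((Finset.Icc (-⌊6 * Real.sqrt lam⌋) ⌊6 * Real.sqrt lam⌋).card : ℝ)⁻¹ *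
            ∑ r ∈ Finset.Icc (-⌊6 * Real.sqrt lam⌋) ⌊6 * Real.sqrt lam⌋,
              (1 + (2 * (r : ℝ) * x) ^ 2) ^ (-(N : ℝ) / 2)) *
          (((Finset.Icc ⌈Real.sqrt lam / 3⌉ ⌊3 * Real.sqrt lam⌋).card : ℝ)⁻¹ *
            ∑ s ∈ Finset.Icc ⌈Real.sqrt lam / 3⌉ ⌊3 * Real.sqrt lam⌋,
              (1 + (2 * (s : ℝ) * x - Real.sqrt lam * y) ^ 2) ^ (-(N : ℝ) / 2)) :=
  stmt_14_general N
end
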